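/- Let E be a low-defect expression and T = T(E) its associated low-defect tree. For any two variables x and y of E, one has x ⪯ y in the nesting ordering of E if and only if the non-root vertex of T corresponding to x is a descendant of the non-root vertex of T corresponding to y. -/

import Mathlib

/-- `CpxW n k` : the positive integer `n` can be written using exactly `k` ones,
with an arbitrary combination of additions and multiplications. -/
inductive CpxW : ℕ → ℕ → Prop
  | one : CpxW 1 1
  | add {a b m n : ℕ} : CpxW a m → CpxW b n → CpxW (a + b) (m + n)
  | mul {a b m n : ℕ} : CpxW a m → CpxW b n → CpxW (a * b) (m + n)

/-- The integer complexity `‖n‖`. -/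
noncomputable def cpx (n : ℕ) : ℕ := sInf {k | CpxW n k}

/-- Low-defect expressions: built from positive integer constants (rule `const`,
positivity recorded in `LDE.WF`), products (rule `mul`, disjointness of the
variables recorded in `LDE.WF`) and `E·x + c` (rule `step`, freshness of `x`
recorded in `LDE.WF`).  Variables are indexed by natural numbers. -/
inductive LDE : Type
  | const (n : ℕ) : LDE
  | mul (E₁ E₂ : LDE) : LDE
  | step (E : LDE) (x : ℕ) (c : ℕ) : LDE

/-- The set of variables used by a low-defect expression. -/
def LDE.vars : LDE → Finset ℕ
  | .const _ => ∅
  | .mul E₁ E₂ => E₁.vars ∪ E₂.vars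
  | .step E x _ => insert x E.vars

/-- Well-formedness of a low-defect expression: constants are positive, the two
factors of a product use disjoint sets of variables, and the variable of
`E·x + c` does not occur in `E`. -/
def LDE.WF : LDE → Prop
  | .const n => 0 < n
  | .mul E₁ E₂ => E₁.WF ∧ E₂.WF ∧ Disjoint E₁.vars E₂.vars
  | .step E x c => E.WF ∧ x ∉ E.vars ∧ 0 < c

/-- The polynomial obtained by evaluating a low-defect expression. -/
noncomputable def LDE.poly : LDE → MvPolynomial ℕ ℤ
  | .const n => MvPolynomial.C (n : ℤ)
  | .mul E₁ E₂ => E₁.poly * E₂.poly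
  | .step E x c => E.poly * MvPolynomial.X x + MvPolynomial.C (c : ℤ)

/-- The complexity `‖E‖` of a low-defect expression. -/
noncomputable def LDE.cpx : LDE → ℕ
  | .const n => _root_.cpx n
  | .mul E₁ E₂ => E₁.cpx + E₂.cpx
  | .step E _ c => E.cpx + _root_.cpx c

/-- Low-defect trees: rooted trees whose vertices and edges are labeled by
natural numbers (positivity of the labels is recorded in `LDT.Pos`); a node
carries its label together with the list of its subtrees, each with the label of
the corresponding edge. -/
inductive LDT : Type
  | node (label : ℕ) (children : List (ℕ × LDT)) : LDT

/-- The label of the root. -/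
def LDT.label : LDT → ℕ | .node n _ => n

/-- The children (edge label, subtree) of the root. -/
def LDT.children : LDT → List (ℕ × LDT) | .node _ cs => cs

mutual
/-- All labels of a low-defect tree are positive. -/
def LDT.Pos : LDT → Prop
  | .node n cs => 0 < n ∧ LDT.PosAux cs

def LDT.PosAux : List (ℕ × LDT) → Prop
  | [] => True
  | c :: cs => 0 < c.1 ∧ c.2.Pos ∧ LDT.PosAux cs
end

/-- Isomorphism of labeled rooted trees: a root-preserving, label-preserving
graph isomorphism; concretely, the root labels agree and the children lists
match up to a permutation, recursively. -/
inductive LDT.Iso : LDT → LDT → Prop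
  | node (n : ℕ) (cs₁ cs₂ : List (ℕ × LDT)) (σ : Fin cs₁.length ≃ Fin cs₂.length)
      (hlab : ∀ i : Fin cs₁.length, (cs₁.get i).1 = (cs₂.get (σ i)).1)
      (hiso : ∀ i : Fin cs₁.length, LDT.Iso (cs₁.get i).2 (cs₂.get (σ i)).2) :
      LDT.Iso (.node n cs₁) (.node n cs₂)

/-- The low-defect tree `T(E)` associated to a low-defect expression `E`. -/
def LDE.tree : LDE → LDT
  | .const n => .node n []
  | .step E _ c => .node 1 [(c, E.tree)]
  | .mul E₁ E₂ => .node (E₁.tree.label * E₂.tree.label) (E₁.tree.children ++ E₂.tree.children)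

/-- The subtree of a low-defect tree at a position (a path from the root, given
by the list of child indices); `none` if there is no such vertex. -/
def LDT.sub? : LDT → List ℕ → Option LDT
  | t, [] => some t
  | t, i :: p =>
    match t.children[i]? with
    | some c => LDT.sub? c.2 p
    | none => none

/-- `p` is a vertex of `t` (vertices are encoded by their positions). -/
def LDT.IsVert (t : LDT) (p : List ℕ) : Prop := (t.sub? p).isSome

/-- The label of the vertex at position `p` (junk value `1` if `p` is not a
vertex). -/
def LDT.labelAt (t : LDT) (p : List ℕ) : ℕ := ((t.sub? p).map LDT.label).getD 1

/-- The list of children at position `p`. -/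
def LDT.childrenAt (t : LDT) (p : List ℕ) : List (ℕ × LDT) :=
  ((t.sub? p).map LDT.children).getD []

/-- The label of the edge joining the non-root vertex at position `q` to its
parent (junk value `1` if there is no such edge). -/
def LDT.edgeLabelAt (t : LDT) (q : List ℕ) : ℕ :=
  (((t.sub? q.dropLast).bind (fun s => s.children[q.getLast?.getD 0]?)).map
    Prod.fst).getD 1

mutual
/-- The list of all positions (vertices) of a low-defect tree. -/
def LDT.positions : LDT → List (List ℕ)
  | .node _ cs => [] :: LDT.positionsAux 0 cs

def LDT.positionsAux : ℕ → List (ℕ × LDT) → List (List ℕ)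
  | _, [] => []
  | i, c :: cs => (c.2.positions.map (i :: ·)) ++ LDT.positionsAux (i + 1) cs
end

/-- The finite set of vertices (positions) of a low-defect tree. -/
def LDT.vertFinset (t : LDT) : Finset (List ℕ) := t.positions.toFinset

/-- The finite set of edges of a low-defect tree, an edge being encoded by the
position of its lower (non-root) endpoint. -/
def LDT.edgeFinset (t : LDT) : Finset (List ℕ) := t.positions.toFinset.erase []

/-- The variable of `E` corresponding to the non-root vertex of `T(E)` at a given
position, under the canonical bijection between variables of `E` and non-root
vertices of `T(E)`. -/
def LDE.varAt : LDE → List ℕ → Option ℕ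
  | .const _, _ => none
  | .step E x _, p =>
    match p with
    | 0 :: p' => if p' = [] then some x else E.varAt p'
    | _ => none
  | .mul E₁ E₂, p =>
    match p with
    | i :: p' =>
      if i < E₁.tree.children.length then E₁.varAt (i :: p')
      else E₂.varAt ((i - E₁.tree.children.length) :: p')
    | [] => none

/-- The position of the non-root vertex of `T(E)` corresponding to a variable of
`E`, under the canonical bijection. -/
def LDE.posOf : LDE → ℕ → Option (List ℕ)
  | .const _, _ => none
  | .step E v _, x => if x = v then some [0] else (E.posOf x).map (0 :: ·)
  | .mul E₁ E₂, x =>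
    match E₁.posOf x with
    | some p => some p
    | none => (E₂.posOf x).map (fun p =>
        match p with
        | i :: p' => (i + E₁.tree.children.length) :: p'
        | [] => [])

/-- The nesting ordering on the variables of a low-defect expression:
`x ⪯ y` iff `x` appears in the smallest low-defect subexpression of `E`
containing `y` (which is the subexpression `E'·y + c` where `y` is introduced). -/
def LDE.nestLe : LDE → ℕ → ℕ → Prop
  | .const _, _, _ => False
  | .step E v _, x, y => if y = v then (x = y ∨ x ∈ E.vars) else E.nestLe x y
  | .mul E₁ E₂, x, y => E₁.nestLe x y ∨ E₂.nestLe x y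

/-!
Both sides of the equivalence obey the same recursion along the three formation rules.
For `E'·v + c` the vertex of `v` is the unique child `[0]` of the root and every other
vertex lies below it, so the descendants of `v` are exactly `v` and the variables of `E'`.
For a product `E₁·E₂` the root children of `T(E₁)` come first, so the vertices of
variables of `E₂` are those of `T(E₂)` with the first index shifted past them; by
disjointness no vertex from one factor is below a vertex from the other.
-/

namespace LDE

def IsDescendant (E : LDE) (x y : ℕ) : Prop :=
  ∃ px py : List ℕ, E.posOf x = some px ∧ E.posOf y = some py ∧ py <+: px

/-- The reindexing of the vertices of `T(E₂)` inside `T(E₁·E₂)`. -/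
def shiftHead (n : ℕ) : List ℕ → List ℕ
  | i :: p => (i + n) :: p
  | [] => []

theorem shiftHead_prefix_shiftHead_iff (n : ℕ) {p q : List ℕ} :
    shiftHead n p <+: shiftHead n q ↔ p <+: q := by
  cases p <;> cases q <;> simp [shiftHead, List.cons_prefix_cons]

theorem isSome_posOf_iff (E : LDE) (x : ℕ) : (E.posOf x).isSome ↔ x ∈ E.vars := by
  induction E with
  | const n => simp [posOf, vars]
  | mul E₁ E₂ ih₁ ih₂ =>
    rw [vars, Finset.mem_union, ← ih₁, ← ih₂]
    cases h : E₁.posOf x <;> simp [posOf, h]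
  | step E v c ih =>
    rw [vars, Finset.mem_insert, ← ih]
    by_cases hx : x = v <;> simp [posOf, hx]

theorem posOf_eq_none {E : LDE} {x : ℕ} (hx : x ∉ E.vars) : E.posOf x = none :=
  Option.not_isSome_iff_eq_none.1 fun h => hx ((E.isSome_posOf_iff x).1 h)

theorem IsDescendant.mem_vars {E : LDE} {x y : ℕ} (h : E.IsDescendant x y) :
    x ∈ E.vars ∧ y ∈ E.vars := by
  obtain ⟨px, py, hx, hy, -⟩ := h
  exact ⟨(E.isSome_posOf_iff x).1 (by simp [hx]), (E.isSome_posOf_iff y).1 (by simp [hy])⟩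

theorem posOf_step_self (E : LDE) (v c : ℕ) : (step E v c).posOf v = some [0] := by
  simp [posOf]

theorem posOf_step_of_ne (E : LDE) {v x : ℕ} (c : ℕ) (hx : x ≠ v) :
    (step E v c).posOf x = (E.posOf x).map (0 :: ·) := by
  simp [posOf, hx]

theorem posOf_mul_of_mem (E₁ E₂ : LDE) {x : ℕ} (hx : x ∈ E₁.vars) :
    (mul E₁ E₂).posOf x = E₁.posOf x := by
  obtain ⟨p, hp⟩ := Option.isSome_iff_exists.1 ((E₁.isSome_posOf_iff x).2 hx)
  simp [posOf, hp]

theorem posOf_mul_of_not_mem (E₁ E₂ : LDE) {x : ℕ} (hx : x ∉ E₁.vars) :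
    (mul E₁ E₂).posOf x = (E₂.posOf x).map (shiftHead E₁.tree.children.length) := by
  simp only [posOf, posOf_eq_none hx]
  congr 1

theorem exists_cons_of_posOf_eq_some {E : LDE} {x : ℕ} {p : List ℕ} (h : E.posOf x = some p) :
    ∃ i q, p = i :: q ∧ i < E.tree.children.length := by
  induction E generalizing p with
  | const n => simp [posOf] at h
  | mul E₁ E₂ ih₁ ih₂ =>
    have hlen : (mul E₁ E₂).tree.children.length =
        E₁.tree.children.length + E₂.tree.children.length := List.length_append
    by_cases hx : x ∈ E₁.vars
    · rw [posOf_mul_of_mem _ _ hx] at h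
      obtain ⟨i, q, rfl, hi⟩ := ih₁ h
      exact ⟨i, q, rfl, by omega⟩
    · rw [posOf_mul_of_not_mem _ _ hx, Option.map_eq_some_iff] at h
      obtain ⟨p₂, hp₂, rfl⟩ := h
      obtain ⟨i, q, rfl, hi⟩ := ih₂ hp₂
      exact ⟨i + E₁.tree.children.length, q, rfl, by omega⟩
  | step E v c ih =>
    by_cases hx : x = v
    · rw [hx, posOf_step_self, Option.some_inj] at h
      exact ⟨0, [], h.symm, Nat.zero_lt_one⟩
    · rw [posOf_step_of_ne _ _ hx, Option.map_eq_some_iff] at h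
      obtain ⟨q, -, rfl⟩ := h
      exact ⟨0, q, rfl, Nat.zero_lt_one⟩

theorem isDescendant_const (n x y : ℕ) : ¬ (const n).IsDescendant x y := by
  simp [IsDescendant, posOf]

theorem isDescendant_step {E : LDE} {v : ℕ} (c : ℕ) (hv : v ∉ E.vars) (x y : ℕ) :
    (step E v c).IsDescendant x y ↔
      if y = v then x = y ∨ x ∈ E.vars else E.IsDescendant x y := by
  split_ifs with hy
  · subst hy
    constructor
    · intro h
      simpa [vars] using h.mem_vars.1
    · rintro (rfl | hx)
      · exact ⟨[0], [0], posOf_step_self E x c, posOf_step_self E x c, List.prefix_refl _⟩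
      · have hxy : x ≠ y := fun h => hv (h ▸ hx)
        obtain ⟨p, hp⟩ := Option.isSome_iff_exists.1 ((E.isSome_posOf_iff x).2 hx)
        refine ⟨0 :: p, [0], ?_, posOf_step_self E y c, p, rfl⟩
        rw [posOf_step_of_ne _ _ hxy, hp, Option.map_some]
  by_cases hx : x = v
  · subst hx
    refine iff_of_false ?_ fun h => hv h.mem_vars.1
    rintro ⟨px, py, hpx, hpy, hpre⟩
    rw [posOf_step_self, Option.some_inj] at hpx
    rw [posOf_step_of_ne _ _ hy, Option.map_eq_some_iff] at hpy
    obtain ⟨q, hq, rfl⟩ := hpy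
    obtain ⟨j, q', rfl, -⟩ := exists_cons_of_posOf_eq_some hq
    simp [← hpx, List.cons_prefix_cons] at hpre
  · simp [IsDescendant, posOf_step_of_ne _ _ hx, posOf_step_of_ne _ _ hy, List.cons_prefix_cons]

theorem isDescendant_mul_of_mem (E₁ E₂ : LDE) {x y : ℕ} (hx : x ∈ E₁.vars)
    (hy : y ∈ E₁.vars) : (mul E₁ E₂).IsDescendant x y ↔ E₁.IsDescendant x y := by
  simp only [IsDescendant, posOf_mul_of_mem _ _ hx, posOf_mul_of_mem _ _ hy]

theorem isDescendant_mul_of_not_mem (E₁ E₂ : LDE) {x y : ℕ} (hx : x ∉ E₁.vars)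
    (hy : y ∉ E₁.vars) : (mul E₁ E₂).IsDescendant x y ↔ E₂.IsDescendant x y := by
  simp only [IsDescendant, posOf_mul_of_not_mem _ _ hx, posOf_mul_of_not_mem _ _ hy,
    Option.map_eq_some_iff]
  constructor
  · rintro ⟨-, -, ⟨px, hpx, rfl⟩, ⟨py, hpy, rfl⟩, hpre⟩
    exact ⟨px, py, hpx, hpy, (shiftHead_prefix_shiftHead_iff _).1 hpre⟩
  · rintro ⟨px, py, hpx, hpy, hpre⟩
    exact ⟨_, _, ⟨px, hpx, rfl⟩, ⟨py, hpy, rfl⟩, (shiftHead_prefix_shiftHead_iff _).2 hpre⟩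

theorem exists_cons_of_posOf_mul_eq_some {E₁ E₂ : LDE} {x : ℕ} {p : List ℕ}
    (h : (mul E₁ E₂).posOf x = some p) :
    ∃ i q, p = i :: q ∧ (i < E₁.tree.children.length ↔ x ∈ E₁.vars) := by
  by_cases hx : x ∈ E₁.vars
  · rw [posOf_mul_of_mem _ _ hx] at h
    obtain ⟨i, q, rfl, hi⟩ := exists_cons_of_posOf_eq_some h
    exact ⟨i, q, rfl, iff_of_true hi hx⟩
  · rw [posOf_mul_of_not_mem _ _ hx, Option.map_eq_some_iff] at h
    obtain ⟨p₂, hp₂, rfl⟩ := h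
    obtain ⟨i, q, rfl, -⟩ := exists_cons_of_posOf_eq_some hp₂
    exact ⟨_, q, rfl, iff_of_false (by omega) hx⟩

theorem IsDescendant.mem_iff_mem_of_mul {E₁ E₂ : LDE} {x y : ℕ}
    (h : (mul E₁ E₂).IsDescendant x y) : x ∈ E₁.vars ↔ y ∈ E₁.vars := by
  obtain ⟨px, py, hpx, hpy, hpre⟩ := h
  obtain ⟨i, p, rfl, hi⟩ := exists_cons_of_posOf_mul_eq_some hpx
  obtain ⟨j, q, rfl, hj⟩ := exists_cons_of_posOf_mul_eq_some hpy
  rw [← hi, ← hj, (List.cons_prefix_cons.1 hpre).1]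

theorem isDescendant_mul {E₁ E₂ : LDE} (hd : Disjoint E₁.vars E₂.vars) (x y : ℕ) :
    (mul E₁ E₂).IsDescendant x y ↔ E₁.IsDescendant x y ∨ E₂.IsDescendant x y := by
  constructor
  · intro h
    by_cases hy : y ∈ E₁.vars
    · exact .inl ((isDescendant_mul_of_mem E₁ E₂ (h.mem_iff_mem_of_mul.2 hy) hy).1 h)
    · exact .inr ((isDescendant_mul_of_not_mem E₁ E₂ (mt h.mem_iff_mem_of_mul.1 hy) hy).1 h)
  · rintro (h | h)
    · exact (isDescendant_mul_of_mem E₁ E₂ h.mem_vars.1 h.mem_vars.2).2 h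
    · exact (isDescendant_mul_of_not_mem E₁ E₂ (Finset.disjoint_right.1 hd h.mem_vars.1)
        (Finset.disjoint_right.1 hd h.mem_vars.2)).2 h

theorem nestLe_iff_isDescendant {E : LDE} (hE : E.WF) (x y : ℕ) :
    E.nestLe x y ↔ E.IsDescendant x y := by
  induction E with
  | const n => simp [nestLe, isDescendant_const]
  | mul E₁ E₂ ih₁ ih₂ =>
    obtain ⟨h₁, h₂, hd⟩ := hE
    rw [nestLe, isDescendant_mul hd, ih₁ h₁, ih₂ h₂]
  | step E v c ih =>
    obtain ⟨hE, hv, -⟩ := hE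
    rw [nestLe, isDescendant_step c hv, ih hE]

end LDE

/-- `x ⪯ y` in the nesting ordering of `E` iff the vertex of
`T(E)` corresponding to `x` is a descendant of the vertex corresponding to `y`
(positions being paths from the root, `u` is a descendant of `v` iff `v` is a
prefix of `u`). -/
theorem nesting_iff_descendant (E : LDE) (hE : E.WF) (x y : ℕ)
    (hx : x ∈ E.vars) (hy : y ∈ E.vars) :
    E.nestLe x y ↔
      ∃ px py : List ℕ, E.posOf x = some px ∧ E.posOf y = some py ∧ py <+: px :=
  LDE.nestLe_iff_isDescendant hE x y
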